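/- With Δ_n ∈ H_n ι_0 ⊗_{H_{n−1}[y]} ι_1 H_n as above and s_i = τ_i(x_i − x_{i+1}) − 1 ∈ H_n, one has s_{n−1} s_{n−2} ⋯ s_1 · (x_n − y)(x_{n−1} − y) ⋯ (x_2 − y) · Δ_n = 1 ⊗ 1 in H_n ι_0 ⊗_{H_{n−1}[y]} ι_1 H_n. -/

import Mathlib

/-!
Write `D_j` for the action of `x_j - y` on the left tensor factor, `h ↦ x_j h - h x_n`; these
operators commute. Put `ψ_r = D_{r+1} ⋯ D_n (τ_r ⋯ τ_{n-1})`, so `ψ_n = 1`. Pulling `τ_r`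
through `D_{r+2}, …, D_n` and using `x_{r+1} τ_r = τ_r x_r - 1` gives
`ψ_r = τ_r D_r ψ_{r+1} - ψ_{r+1}`, and from this, by descending induction, `D_r ψ_r = 0` and
`s_r ψ_r = ψ_{r+1}`. Hence the operator `D_2 ⋯ D_n` kills every summand of `Δ_n` with `r ≥ 2`
(it contains `D_r ⋯ D_n`), and the summand with `r = 1` becomes
`s_{n-1} ⋯ s_1 ψ_1 ⊗ 1 = ψ_n ⊗ 1 = 1 ⊗ 1`. In the code all indices are shifted down by one.
-/

open scoped TensorProduct

namespace NilHecke

variable (k : Type) [Field k]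

/-- Relations of the nil affine Hecke algebra `H n` (0-based indices: generators
`x_0,…,x_{n-1}` and `τ_0,…,τ_{n-2}`; out-of-range generators are killed). -/
inductive Rel (n : ℕ) : FreeAlgebra k (ℕ ⊕ ℕ) → FreeAlgebra k (ℕ ⊕ ℕ) → Prop
  | xkill (i : ℕ) (h : n ≤ i) : Rel n (FreeAlgebra.ι k (.inl i)) 0
  | tkill (i : ℕ) (h : n ≤ i + 1) : Rel n (FreeAlgebra.ι k (.inr i)) 0
  | tsq (i : ℕ) : Rel n (FreeAlgebra.ι k (.inr i) * FreeAlgebra.ι k (.inr i)) 0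
  | braid (i : ℕ) :
      Rel n (FreeAlgebra.ι k (.inr i) * FreeAlgebra.ι k (.inr (i+1)) * FreeAlgebra.ι k (.inr i))
        (FreeAlgebra.ι k (.inr (i+1)) * FreeAlgebra.ι k (.inr i) * FreeAlgebra.ι k (.inr (i+1)))
  | tcomm (i j : ℕ) (h : i + 1 < j) :
      Rel n (FreeAlgebra.ι k (.inr i) * FreeAlgebra.ι k (.inr j))
        (FreeAlgebra.ι k (.inr j) * FreeAlgebra.ι k (.inr i))
  | xcomm (i j : ℕ) :
      Rel n (FreeAlgebra.ι k (.inl i) * FreeAlgebra.ι k (.inl j))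
        (FreeAlgebra.ι k (.inl j) * FreeAlgebra.ι k (.inl i))
  | txcomm (i j : ℕ) (h1 : j ≠ i) (h2 : j ≠ i + 1) :
      Rel n (FreeAlgebra.ι k (.inr i) * FreeAlgebra.ι k (.inl j))
        (FreeAlgebra.ι k (.inl j) * FreeAlgebra.ι k (.inr i))
  | tx (i : ℕ) (h : i + 1 < n) :
      Rel n (FreeAlgebra.ι k (.inr i) * FreeAlgebra.ι k (.inl i)
          - FreeAlgebra.ι k (.inl (i+1)) * FreeAlgebra.ι k (.inr i)) 1
  | xt (i : ℕ) (h : i + 1 < n) :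
      Rel n (FreeAlgebra.ι k (.inl i) * FreeAlgebra.ι k (.inr i)
          - FreeAlgebra.ι k (.inr i) * FreeAlgebra.ι k (.inl (i+1))) 1

/-- The nil affine Hecke algebra on `n` strands over `k`. -/
def H (n : ℕ) : Type := RingQuot (Rel k n)

instance (n : ℕ) : Ring (H k n) := inferInstanceAs (Ring (RingQuot (Rel k n)))

instance (n : ℕ) : Algebra k (H k n) := inferInstanceAs (Algebra k (RingQuot (Rel k n)))

/-- The polynomial generator `x_{i+1}` (0-based `x_i`). -/
def X (n i : ℕ) : H k n := RingQuot.mkAlgHom k (Rel k n) (FreeAlgebra.ι k (.inl i))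

/-- The nil Hecke generator `τ_{i+1}` (0-based `τ_i`). -/
def T (n i : ℕ) : H k n := RingQuot.mkAlgHom k (Rel k n) (FreeAlgebra.ι k (.inr i))

/-- The element `s_i = τ_i (x_i - x_{i+1}) - 1`. -/
def s (n i : ℕ) : H k n := T k n i * (X k n i - X k n (i+1)) - 1

/-- The ascending product `τ_a τ_{a+1} ⋯ τ_{b-1}` (0-based). -/
def chain (n a b : ℕ) : H k n := (List.map (T k n) (List.range' a (b - a))).prod

theorem X_kill (n i : ℕ) (h : n ≤ i) : X k n i = 0 := by
  have h := RingQuot.mkAlgHom_rel k (Rel.xkill (k := k) (n := n) i h)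
  simp only [X, map_zero] at h ⊢
  exact h

theorem T_kill (n i : ℕ) (h : n ≤ i + 1) : T k n i = 0 := by
  have h := RingQuot.mkAlgHom_rel k (Rel.tkill (k := k) (n := n) i h)
  simp only [T, map_zero] at h ⊢
  exact h

theorem T_sq (n i : ℕ) : T k n i * T k n i = 0 := by
  have h := RingQuot.mkAlgHom_rel k (Rel.tsq (k := k) (n := n) i)
  simp only [T, map_mul, map_zero] at h ⊢
  exact h

theorem T_braid (n i : ℕ) :
    T k n i * T k n (i+1) * T k n i = T k n (i+1) * T k n i * T k n (i+1) := by
  have h := RingQuot.mkAlgHom_rel k (Rel.braid (k := k) (n := n) i)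
  simp only [T, map_mul] at h ⊢
  exact h

theorem T_comm (n i j : ℕ) (h : i + 1 < j) : T k n i * T k n j = T k n j * T k n i := by
  have h := RingQuot.mkAlgHom_rel k (Rel.tcomm (k := k) (n := n) i j h)
  simp only [T, map_mul] at h ⊢
  exact h

theorem X_comm (n i j : ℕ) : X k n i * X k n j = X k n j * X k n i := by
  have h := RingQuot.mkAlgHom_rel k (Rel.xcomm (k := k) (n := n) i j)
  simp only [X, map_mul] at h ⊢
  exact h

theorem TX_comm (n i j : ℕ) (h1 : j ≠ i) (h2 : j ≠ i + 1) :
    T k n i * X k n j = X k n j * T k n i := by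
  have h := RingQuot.mkAlgHom_rel k (Rel.txcomm (k := k) (n := n) i j h1 h2)
  simp only [T, X, map_mul] at h ⊢
  exact h

theorem TX (n i : ℕ) (h : i + 1 < n) :
    T k n i * X k n i - X k n (i+1) * T k n i = 1 := by
  have h := RingQuot.mkAlgHom_rel k (Rel.tx (k := k) (n := n) i h)
  simp only [T, X, map_mul, map_sub, map_one] at h ⊢
  exact h

theorem XT (n i : ℕ) (h : i + 1 < n) :
    X k n i * T k n i - T k n i * X k n (i+1) = 1 := by
  have h := RingQuot.mkAlgHom_rel k (Rel.xt (k := k) (n := n) i h)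
  simp only [T, X, map_mul, map_sub, map_one] at h ⊢
  exact h

/-- The inclusion `H m → H n` for `m ≤ n`. -/
def incl (m n : ℕ) (h : m ≤ n) : H k m →ₐ[k] H k n :=
  RingQuot.liftAlgHom k ⟨FreeAlgebra.lift k (fun g =>
    match g with
    | .inl i => if i < m then X k n i else 0
    | .inr i => if i + 1 < m then T k n i else 0), by
      rintro a b r
      induction r with
      | xkill i h' => simp only [FreeAlgebra.lift_ι_apply, map_zero]; rw [if_neg (by omega)]
      | tkill i h' => simp only [FreeAlgebra.lift_ι_apply, map_zero]; rw [if_neg (by omega)]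
      | tsq i =>
          simp only [map_mul, FreeAlgebra.lift_ι_apply, map_zero]
          split_ifs <;> simp [T_sq]
      | braid i =>
          simp only [map_mul, FreeAlgebra.lift_ι_apply]
          split_ifs <;> simp [T_braid]
      | tcomm i j h' =>
          simp only [map_mul, FreeAlgebra.lift_ι_apply]
          split_ifs <;> simp [T_comm k n i j h']
      | xcomm i j =>
          simp only [map_mul, FreeAlgebra.lift_ι_apply]
          split_ifs <;> simp [X_comm k n i j]
      | txcomm i j h1 h2 =>
          simp only [map_mul, FreeAlgebra.lift_ι_apply]
          split_ifs <;> simp [TX_comm k n i j h1 h2]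
      | tx i h' =>
          simp only [map_sub, map_mul, map_one, FreeAlgebra.lift_ι_apply]
          rw [if_pos h', if_pos (by omega : i < m), if_pos (by omega : i + 1 < m)]
          exact TX k n i (by omega)
      | xt i h' =>
          simp only [map_sub, map_mul, map_one, FreeAlgebra.lift_ι_apply]
          rw [if_pos (by omega : i < m), if_pos h', if_pos h']
          exact XT k n i (by omega)⟩

/-- The shift embedding `H m → H n` (sending `x_i ↦ x_{i+1}`, `τ_i ↦ τ_{i+1}`). -/
def shj (m n : ℕ) (h : m + 1 ≤ n ∨ m = 0) : H k m →ₐ[k] H k n :=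
  RingQuot.liftAlgHom k ⟨FreeAlgebra.lift k (fun g =>
    match g with
    | .inl i => if i < m then X k n (i+1) else 0
    | .inr i => if i + 1 < m then T k n (i+1) else 0), by
      rintro a b r
      induction r with
      | xkill i h' => simp only [FreeAlgebra.lift_ι_apply, map_zero]; rw [if_neg (by omega)]
      | tkill i h' => simp only [FreeAlgebra.lift_ι_apply, map_zero]; rw [if_neg (by omega)]
      | tsq i =>
          simp only [map_mul, FreeAlgebra.lift_ι_apply, map_zero]
          split_ifs <;> simp [T_sq]
      | braid i =>
          simp only [map_mul, FreeAlgebra.lift_ι_apply]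
          split_ifs <;> simp [T_braid]
      | tcomm i j h' =>
          simp only [map_mul, FreeAlgebra.lift_ι_apply]
          split_ifs <;> simp [T_comm k n (i+1) (j+1) (by omega)]
      | xcomm i j =>
          simp only [map_mul, FreeAlgebra.lift_ι_apply]
          split_ifs <;> simp [X_comm k n (i+1) (j+1)]
      | txcomm i j h1 h2 =>
          simp only [map_mul, FreeAlgebra.lift_ι_apply]
          split_ifs <;> simp [TX_comm k n (i+1) (j+1) (by omega) (by omega)]
      | tx i h' =>
          simp only [map_sub, map_mul, map_one, FreeAlgebra.lift_ι_apply]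
          rw [if_pos h', if_pos (by omega : i < m), if_pos (by omega : i + 1 < m)]
          exact TX k n (i+1) (by omega)
      | xt i h' =>
          simp only [map_sub, map_mul, map_one, FreeAlgebra.lift_ι_apply]
          rw [if_pos (by omega : i < m), if_pos h', if_pos h']
          exact XT k n (i+1) (by omega)⟩

end NilHecke

namespace NilHecke

variable (k : Type) [Field k]

/-- `ι_0 : H_{n−1}[y] → H_n`, sending `x_i ↦ x_i`, `τ_i ↦ τ_i`, `y ↦ x_n`
(0-based: `y ↦ x_{n-1}`, the last variable). -/
def iota0 (n : ℕ) (p : Polynomial (H k (n-1))) : H k n :=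
  p.sum fun i a => incl k (n-1) n (Nat.sub_le n 1) a * X k n (n-1) ^ i

/-- `ι_1 : H_{n−1}[y] → H_n`, sending `x_i ↦ x_{i+1}`, `τ_i ↦ τ_{i+1}`, `y ↦ x_1`
(0-based: `y ↦ x_0`, the first variable). -/
def iota1 (n : ℕ) (p : Polynomial (H k (n-1))) : H k n :=
  p.sum fun i a => shj k (n-1) n (by omega) a * X k n 0 ^ i

/-- The balancing submodule of `H_n ⊗_k H_n` whose quotient is the balanced tensor
product `H_n ι_0 ⊗_{H_{n−1}[y]} ι_1 H_n`. -/
noncomputable def bal (n : ℕ) : Submodule k (H k n ⊗[k] H k n) :=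
  Submodule.span k {z | ∃ (a b : H k n) (p : Polynomial (H k (n-1))),
    z = (a * iota0 k n p) ⊗ₜ[k] b - a ⊗ₜ[k] (iota1 k n p * b)}

/-- A representative in `H_n ⊗_k H_n` of the element
`Δ_n = Σ_{r=1}^{n} (τ_r ⋯ τ_{n−1}) ⊗ (τ_1 ⋯ τ_{r−1})` (1-based indices). -/
noncomputable def deltaT (n : ℕ) : H k n ⊗[k] H k n :=
  ∑ r ∈ Finset.range n, chain k n r (n-1) ⊗ₜ[k] chain k n 0 r

/-- A representative of `p · Δ_n` for `p ∈ H_n[y]` acting through the left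
`H_n[y]`-module structure of `H_n ι_0 ⊗_{H_{n−1}[y]} ι_1 H_n` (on the left factor,
`y` acting via `x_n`, i.e. a coefficient `c·y^i` sends `m ⊗ h` to `c·m·x_n^i ⊗ h`). -/
noncomputable def actDelta (n : ℕ) (p : Polynomial (H k n)) : H k n ⊗[k] H k n :=
  ∑ r ∈ Finset.range n,
    (p.sum fun i c => c * chain k n r (n-1) * X k n (n-1) ^ i) ⊗ₜ[k] chain k n 0 r

end NilHecke

open Polynomial

namespace NilHecke

section LeftRightEval

variable {R A : Type*} [CommRing R] [Ring A] [Algebra R A]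

/-- The action of `A[y]` on `A` underlying `actDelta`: coefficients multiply on the left and
`y` on the right. -/
noncomputable def leftRightEval (y : A) : A[X] →+* Module.End R A :=
  eval₂RingHom' (Algebra.lmul R A).toRingHom (LinearMap.mulRight R y)
    fun a => LinearMap.commute_mulLeft_right a y

theorem leftRightEval_apply (y : A) (p : A[X]) (h : A) :
    leftRightEval (R := R) y p h = p.sum fun i c => c * h * y ^ i := by
  simp [leftRightEval, eval₂_eq_sum, Polynomial.sum, LinearMap.sum_apply, mul_assoc]

theorem leftRightEval_C_mul_apply (y a : A) (p : A[X]) (h : A) :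
    leftRightEval (R := R) y (C a * p) h = a * leftRightEval (R := R) y p h := by
  rw [map_mul, Module.End.mul_apply]
  simp [leftRightEval]

end LeftRightEval

section HeckeComputation

variable (k : Type) [Field k] (n : ℕ)

/-- Multiplication by `x_j - y` on `H_n`, where `y` acts on the right by the last variable. -/
noncomputable def D (j : ℕ) : Module.End k (H k n) :=
  leftRightEval (X k n (n-1)) (C (X k n j) - Polynomial.X)

theorem D_apply (j : ℕ) (h : H k n) : D k n j h = X k n j * h - h * X k n (n-1) := by
  simp [D, leftRightEval]

theorem D_commute (i j : ℕ) : Commute (D k n i) (D k n j) := by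
  have hC : Commute (C (X k n i)) (C (X k n j)) :=
    (show Commute (X k n i) (X k n j) from X_comm k n i j).map C
  exact ((hC.sub_right (commute_X _).symm).sub_left
    ((commute_X _).sub_right (Commute.refl _))).map _

theorem X_succ_mul_T (r : ℕ) (hr : r + 1 < n) :
    X k n (r+1) * T k n r = T k n r * X k n r - 1 := by
  rw [← TX k n r hr]; abel

theorem X_mul_T (r : ℕ) (hr : r + 1 < n) :
    X k n r * T k n r = T k n r * X k n (r+1) + 1 := by
  rw [← XT k n r hr]; abel

theorem chain_cons (a b : ℕ) (h : a < b) : chain k n a b = T k n a * chain k n (a+1) b := by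
  rw [chain, chain, show b - a = b - (a+1) + 1 by omega, List.range'_succ, List.map_cons,
    List.prod_cons]

theorem D_T_of_ne (r j : ℕ) (h₁ : j ≠ r) (h₂ : j ≠ r + 1) (h : H k n) :
    D k n j (T k n r * h) = T k n r * D k n j h := by
  rw [D_apply, D_apply, ← mul_assoc, ← TX_comm k n r j h₁ h₂, mul_sub, mul_assoc, mul_assoc]

theorem D_succ_T (r : ℕ) (hr : r + 1 < n) (h : H k n) :
    D k n (r+1) (T k n r * h) = T k n r * D k n r h - h := by
  rw [D_apply, D_apply, ← mul_assoc, X_succ_mul_T k n r hr]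
  noncomm_ring

theorem D_T (r : ℕ) (hr : r + 1 < n) (h : H k n) :
    D k n r (T k n r * h) = T k n r * D k n (r+1) h + h := by
  rw [D_apply, D_apply, ← mul_assoc, X_mul_T k n r hr]
  noncomm_ring

theorem s_mul_T (r : ℕ) (hr : r + 1 < n) : s k n r * T k n r = T k n r := by
  rw [s, sub_mul, mul_assoc, sub_mul, X_mul_T k n r hr, X_succ_mul_T k n r hr]
  simp only [mul_add, mul_sub, mul_one, ← mul_assoc, T_sq, zero_mul, one_mul]
  abel

noncomputable def psi (r : ℕ) : H k n :=
  ((List.range' (r+1) (n-1-r)).map (D k n)).prod (chain k n r (n-1))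

theorem psi_of_succ_eq (r : ℕ) (hr : r + 1 = n) : psi k n r = 1 := by
  rw [psi, show n - 1 - r = 0 by omega, List.range'_zero, List.map_nil, List.prod_nil,
    Module.End.one_apply, chain, show n - 1 - r = 0 by omega, List.range'_zero, List.map_nil,
    List.prod_nil]

theorem psi_eq (r : ℕ) (hr : r + 2 ≤ n) :
    psi k n r = T k n r * D k n r (psi k n (r+1)) - psi k n (r+1) := by
  have hpull (h : H k n) : ((List.range' (r+2) (n-1-(r+1))).map (D k n)).prod (T k n r * h)
      = T k n r * ((List.range' (r+2) (n-1-(r+1))).map (D k n)).prod h := by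
    have hcomm : Commute (LinearMap.mulLeft k (T k n r))
        ((List.range' (r+2) (n-1-(r+1))).map (D k n)).prod := by
      refine Commute.list_prod_right _ _ fun f hf => ?_
      obtain ⟨j, hj, rfl⟩ := List.mem_map.1 hf
      obtain ⟨i, -, rfl⟩ := List.mem_range'.1 hj
      exact LinearMap.ext fun h => (D_T_of_ne k n r _ (by omega) (by omega) h).symm
    exact (LinearMap.congr_fun hcomm.eq h).symm
  rw [psi, show n - 1 - r = n - 1 - (r+1) + 1 by omega, List.range'_succ, List.map_cons,
    List.prod_cons, Module.End.mul_apply, chain_cons k n r (n-1) (by omega), hpull,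
    D_succ_T k n r (by omega)]
  rfl

theorem D_psi_eq_zero (r : ℕ) (hr : r < n) : D k n r (psi k n r) = 0 := by
  induction hd : n - 1 - r generalizing r with
  | zero =>
    rw [psi_of_succ_eq k n r (by omega), D_apply, show r = n - 1 by omega, one_mul, mul_one,
      sub_self]
  | succ d ih =>
    set K := psi k n (r+1)
    have hcomm : D k n (r+1) (D k n r K) = D k n r (D k n (r+1) K) :=
      LinearMap.congr_fun (D_commute k n (r+1) r).eq K
    rw [psi_eq k n r (by omega), map_sub, D_T k n r (by omega), hcomm,
      ih (r+1) (by omega) (by omega), map_zero, mul_zero, zero_add, sub_self]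

theorem s_mul_psi (r : ℕ) (hr : r + 2 ≤ n) : s k n r * psi k n r = psi k n (r+1) := by
  set K := psi k n (r+1)
  have hX : (X k n r - X k n (r+1)) * K = D k n r K := by
    rw [← sub_zero (D k n r K), ← D_psi_eq_zero k n (r+1) (by omega), D_apply, D_apply]
    noncomm_ring
  rw [psi_eq k n r hr, mul_sub, ← mul_assoc, s_mul_T k n r (by omega), s, sub_mul, mul_assoc,
    hX, one_mul, sub_sub_cancel]

theorem prod_s_mul_psi (r : ℕ) (hr : r < n) :
    ((List.range' r (n-1-r)).reverse.map (s k n)).prod * psi k n r = 1 := by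
  induction hd : n - 1 - r generalizing r with
  | zero => rw [List.range'_zero, List.reverse_nil, List.map_nil, List.prod_nil, one_mul,
      psi_of_succ_eq k n r (by omega)]
  | succ d ih =>
    rw [List.range'_succ, List.reverse_cons, List.map_append, List.prod_append, List.map_singleton,
      List.prod_singleton, mul_assoc, s_mul_psi k n r (by omega), ih (r+1) (by omega) (by omega)]

theorem prod_D_chain_eq_zero (r : ℕ) (hr₀ : 0 < r) (hr : r < n) :
    ((List.range' 1 (n-1)).map (D k n)).prod (chain k n r (n-1)) = 0 := by
  have hsplit : List.range' 1 (n-1) = List.range' 1 (r-1) ++ r :: List.range' (r+1) (n-1-r) := by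
    have h := List.range'_append_1 (s := 1) (m := r - 1) (n := n - r)
    rwa [show 1 + (r - 1) = r by omega, show r - 1 + (n - r) = n - 1 by omega,
      show n - r = n - 1 - r + 1 by omega, List.range'_succ, eq_comm] at h
  have hpsi := D_psi_eq_zero k n r hr
  rw [psi] at hpsi
  rw [hsplit, List.map_append, List.prod_append, List.map_cons, List.prod_cons,
    Module.End.mul_apply, Module.End.mul_apply, hpsi, map_zero]

theorem leftRightEval_prod_reverse_C_sub_X (l : List ℕ) :
    leftRightEval (R := k) (X k n (n-1))
      (l.reverse.map fun j => C (X k n j) - Polynomial.X).prod = (l.map (D k n)).prod := by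
  rw [map_list_prod, List.map_map]
  exact ((List.reverse_perm l).map _).prod_eq'
    (List.pairwise_map.2 (List.pairwise_of_forall fun i j => D_commute k n i j))

theorem actDelta_eq_sum (p : (H k n)[X]) :
    actDelta k n p = ∑ r ∈ Finset.range n,
      leftRightEval (R := k) (X k n (n-1)) p (chain k n r (n-1)) ⊗ₜ[k] chain k n 0 r := by
  simp only [actDelta, leftRightEval_apply]

end HeckeComputation

/-- `s_{n−1} s_{n−2} ⋯ s_1 · (x_n − y)(x_{n−1} − y) ⋯ (x_2 − y) · Δ_n
= 1 ⊗ 1` in `H_n ι_0 ⊗_{H_{n−1}[y]} ι_1 H_n` (realized as the quotient of `H_n ⊗_k H_n`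
by the balancing submodule `bal`; the displayed element of `H_n[y]` acts through the left
`H_n[y]`-module structure, implemented by `actDelta`). -/
theorem s_x_delta_eq_one (k : Type) [Field k] (n : ℕ) (hn : 1 ≤ n) :
    actDelta k n
        (Polynomial.C (((List.range (n-1)).reverse.map (s k n)).prod) *
          (((List.range' 1 (n-1)).reverse.map
            (fun j => Polynomial.C (X k n j) - Polynomial.X)).prod))
      - (1 : H k n) ⊗ₜ[k] (1 : H k n) ∈ bal k n := by
  convert (bal k n).zero_mem using 1
  rw [sub_eq_zero, actDelta_eq_sum, Finset.sum_eq_single_of_mem 0 (Finset.mem_range.2 hn)]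
  · rw [leftRightEval_C_mul_apply, leftRightEval_prod_reverse_C_sub_X, List.range_eq_range']
    exact congrArg₂ _ (prod_s_mul_psi k n 0 hn) (by simp [chain])
  · intro r hr hr₀
    rw [leftRightEval_C_mul_apply, leftRightEval_prod_reverse_C_sub_X,
      prod_D_chain_eq_zero k n r (Nat.pos_of_ne_zero hr₀) (Finset.mem_range.1 hr), mul_zero,
      TensorProduct.zero_tmul]

end NilHecke
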